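/- Let R be the G-indexed matrix over 𝔽₂ with R(i,j) = 1 iff i + j = 0, and let D_R = diag(R,R,R). Then the involution v ↦ D_R v maps the set ker(H_Z) \ rs(H_X) bijectively onto the set ker(H_Zᵀ) \ rs(M_Z) and preserves Hamming weight. Consequently the X-distance d_X := min{|v| : v ∈ ker(H_Z) \ rs(H_X)} equals min{|v| : v ∈ ker(H_Zᵀ) \ rs(M_Z)}. -/

import Mathlib

open Matrix

/-- `H_X = [A B C]`. -/
def TT_HX {G : Type*} [AddCommGroup G] (a b c : G → ZMod 2) :
    Matrix G (Fin 3 × G) (ZMod 2) :=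
  Matrix.of fun g p =>
    ![Matrix.circulant a, Matrix.circulant b, Matrix.circulant c] p.1 g p.2

/-- `H_Z = [[0, Cᵀ, Bᵀ], [Cᵀ, 0, Aᵀ], [Bᵀ, Aᵀ, 0]]`. -/
def TT_HZ {G : Type*} [AddCommGroup G] (a b c : G → ZMod 2) :
    Matrix (Fin 3 × G) (Fin 3 × G) (ZMod 2) :=
  Matrix.of fun p q =>
    ![![0, (Matrix.circulant c)ᵀ, (Matrix.circulant b)ᵀ],
      ![(Matrix.circulant c)ᵀ, 0, (Matrix.circulant a)ᵀ],
      ![(Matrix.circulant b)ᵀ, (Matrix.circulant a)ᵀ, 0]] p.1 q.1 p.2 q.2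

/-- `M_Z = [Aᵀ Bᵀ Cᵀ]`. -/
def TT_MZ {G : Type*} [AddCommGroup G] (a b c : G → ZMod 2) :
    Matrix G (Fin 3 × G) (ZMod 2) :=
  Matrix.of fun g p =>
    ![(Matrix.circulant a)ᵀ, (Matrix.circulant b)ᵀ, (Matrix.circulant c)ᵀ] p.1 g p.2

/-- Row space `rs(M)`: the span of the rows of `M`. -/
def rowSpace {m n : Type*} (M : Matrix m n (ZMod 2)) : Submodule (ZMod 2) (n → ZMod 2) :=
  Submodule.span (ZMod 2) (Set.range fun i => M i)

/-- Column space `cs(M)`: the span of the columns of `M`. -/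
def colSpace {m n : Type*} (M : Matrix m n (ZMod 2)) : Submodule (ZMod 2) (m → ZMod 2) :=
  Submodule.span (ZMod 2) (Set.range fun j i => M i j)

/-- The matrix `R` with `R(i,j) = 1` iff `i + j = 0`. -/
def Rmat {G : Type*} [AddCommGroup G] [DecidableEq G] : Matrix G G (ZMod 2) :=
  Matrix.of fun i j => if i + j = 0 then 1 else 0

/-- `D_R = diag(R, R, R)`. -/
def DRmat {G : Type*} [AddCommGroup G] [DecidableEq G] :
    Matrix (Fin 3 × G) (Fin 3 × G) (ZMod 2) :=
  Matrix.of fun p q => if p.1 = q.1 then Rmat p.2 q.2 else 0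

/-!
`D_R` is the permutation matrix of the involution `σ (i, g) = (i, -g)`, so `v ↦ D_R v` is
the reindexing `v ↦ v ∘ σ`, which is a weight-preserving linear bijection. Reindexing both
sides of `H_Z` by `σ` transposes it, because its block pattern is symmetric and
`circ(x)ᵀ(-g, -h) = circ(x)ᵀ(h, g)`; and reindexing the columns of `H_X` by `σ` gives the
rows of `M_Z`, up to relabelling the rows by `g ↦ -g`. Hence `σ` carries `ker H_Z` onto
`ker H_Zᵀ` and `rs H_X` onto `rs M_Z`, and the two weight sets coincide.
-/

theorem hammingNorm_comp_equiv {ι ι' β : Type*} [Fintype ι] [Fintype ι'] [Zero β]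
    [DecidableEq β] (e : ι' ≃ ι) (x : ι → β) : hammingNorm (x ∘ e) = hammingNorm x :=
  Finset.card_equiv e (by simp)

theorem Set.BijOn.image_eq_image {α β γ : Type*} {f : α → β} {s : Set α} {t : Set β}
    (hf : Set.BijOn f s t) {w : β → γ} {w' : α → γ} (hw : ∀ x, w (f x) = w' x) :
    w '' t = w' '' s := by
  rw [← hf.image_eq, Set.image_image]
  simp_rw [hw]

theorem rowSpace_submatrix {m m' n n' : Type*} (M : Matrix m n (ZMod 2)) {e₁ : m' → m}
    (he₁ : Function.Surjective e₁) (e₂ : n' ≃ n) :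
    rowSpace (M.submatrix e₁ e₂) =
      (rowSpace M).map (LinearEquiv.funCongrLeft (ZMod 2) (ZMod 2) e₂ :
        (n → ZMod 2) →ₗ[ZMod 2] n' → ZMod 2) := by
  rw [rowSpace, rowSpace, Submodule.map_span, ← Set.range_comp, ← he₁.range_comp]
  rfl

theorem comp_mem_rowSpace_submatrix_iff {m m' n n' : Type*} (M : Matrix m n (ZMod 2))
    {e₁ : m' → m} (he₁ : Function.Surjective e₁) (e₂ : n' ≃ n) (v : n → ZMod 2) :
    v ∘ e₂ ∈ rowSpace (M.submatrix e₁ e₂) ↔ v ∈ rowSpace M := by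
  rw [rowSpace_submatrix M he₁, Submodule.mem_map_equiv]
  show v ∘ e₂ ∘ e₂.symm ∈ _ ↔ _
  rw [Equiv.self_comp_symm, Function.comp_id]

def negSnd (ι G : Type*) [InvolutiveNeg G] : ι × G ≃ ι × G :=
  (Equiv.refl ι).prodCongr (Equiv.neg G)

section TricycleCode

variable {G : Type*} [AddCommGroup G]

theorem DRmat_eq_submatrix_one [DecidableEq G] :
    DRmat =
      (1 : Matrix (Fin 3 × G) (Fin 3 × G) (ZMod 2)).submatrix (negSnd _ G) (Equiv.refl _) := by
  ext ⟨i, g⟩ ⟨j, h⟩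
  simp [DRmat, Rmat, negSnd, one_apply, Prod.ext_iff, eq_comm, ite_and, eq_neg_iff_add_eq_zero,
    add_comm h g]

theorem DRmat_mulVec [Fintype G] [DecidableEq G] (v : Fin 3 × G → ZMod 2) :
    DRmat *ᵥ v = v ∘ negSnd (Fin 3) G := by
  rw [DRmat_eq_submatrix_one, submatrix_mulVec_equiv, one_mulVec]
  rfl

variable (a b c : G → ZMod 2)

theorem TT_HZ_transpose :
    (TT_HZ a b c)ᵀ = (TT_HZ a b c).submatrix (negSnd (Fin 3) G) (negSnd (Fin 3) G) := by
  ext ⟨i, g⟩ ⟨j, h⟩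
  fin_cases i <;> fin_cases j <;> simp [TT_HZ, negSnd, circulant_apply, neg_add_eq_sub]

theorem TT_MZ_eq_submatrix :
    TT_MZ a b c = (TT_HX a b c).submatrix Neg.neg (negSnd (Fin 3) G) := by
  ext g ⟨i, h⟩
  fin_cases i <;> simp [TT_HX, TT_MZ, negSnd, circulant_apply, neg_add_eq_sub]

theorem TT_HZ_transpose_mulVec_comp [Fintype G] (v : Fin 3 × G → ZMod 2) :
    (TT_HZ a b c)ᵀ *ᵥ (v ∘ negSnd _ G) = (TT_HZ a b c *ᵥ v) ∘ negSnd _ G := by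
  rw [TT_HZ_transpose, submatrix_mulVec_equiv, Function.comp_assoc, Equiv.self_comp_symm,
    Function.comp_id]

theorem comp_negSnd_mem_ker_diff_rowSpace_iff [Fintype G] (v : Fin 3 × G → ZMod 2) :
    ((TT_HZ a b c)ᵀ *ᵥ (v ∘ negSnd _ G) = 0 ∧ v ∘ negSnd _ G ∉ rowSpace (TT_MZ a b c)) ↔
      (TT_HZ a b c *ᵥ v = 0 ∧ v ∉ rowSpace (TT_HX a b c)) := by
  rw [TT_HZ_transpose_mulVec_comp, TT_MZ_eq_submatrix,
    comp_mem_rowSpace_submatrix_iff _ neg_surjective]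
  exact and_congr_left' ((negSnd _ G).surjective.injective_comp_right.eq_iff' rfl)

end TricycleCode

/-- The involution `v ↦ D_R v` maps `ker(H_Z) \ rs(H_X)` bijectively onto
`ker(H_Zᵀ) \ rs(M_Z)` preserving Hamming weight; consequently the `X`-distance
`d_X` equals `min{|v| : v ∈ ker(H_Zᵀ) \ rs(M_Z)}`. -/
theorem tt_dX_eq_cocycle_distance {G : Type*} [AddCommGroup G] [Fintype G]
    [DecidableEq G] (a b c : G → ZMod 2) :
    Set.BijOn (fun v => DRmat.mulVec v)
        {v : Fin 3 × G → ZMod 2 |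
          (TT_HZ a b c).mulVec v = 0 ∧ v ∉ rowSpace (TT_HX a b c)}
        {v : Fin 3 × G → ZMod 2 |
          (TT_HZ a b c)ᵀ.mulVec v = 0 ∧ v ∉ rowSpace (TT_MZ a b c)} ∧
      (∀ v : Fin 3 × G → ZMod 2, hammingNorm (DRmat.mulVec v) = hammingNorm v) ∧
      sInf {w : ℕ | ∃ v : Fin 3 × G → ZMod 2,
            ((TT_HZ a b c).mulVec v = 0 ∧ v ∉ rowSpace (TT_HX a b c)) ∧
              hammingNorm v = w} =
        sInf {w : ℕ | ∃ v : Fin 3 × G → ZMod 2,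
            ((TT_HZ a b c)ᵀ.mulVec v = 0 ∧ v ∉ rowSpace (TT_MZ a b c)) ∧
              hammingNorm v = w} := by
  have hweight (v : Fin 3 × G → ZMod 2) : hammingNorm (DRmat *ᵥ v) = hammingNorm v := by
    rw [DRmat_mulVec, hammingNorm_comp_equiv]
  have hbij : Set.BijOn (fun v => DRmat *ᵥ v)
      {v | TT_HZ a b c *ᵥ v = 0 ∧ v ∉ rowSpace (TT_HX a b c)}
      {v | (TT_HZ a b c)ᵀ *ᵥ v = 0 ∧ v ∉ rowSpace (TT_MZ a b c)} := by
    simp_rw [DRmat_mulVec]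
    exact (LinearEquiv.funCongrLeft (ZMod 2) (ZMod 2) (negSnd _ G)).toEquiv.bijOn
      (comp_negSnd_mem_ker_diff_rowSpace_iff a b c)
  exact ⟨hbij, hweight, congrArg sInf (hbij.image_eq_image hweight).symm⟩
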